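/- arXiv:2409.02289 — 2 statements merged into one kernel-verified Lean document; each statement's English description precedes it below -/
import Mathlib

section
/- If a model M of an LE-ALC ABox A additionally satisfies the axiom ∀p (b I p ⇒ d I p) for object names b, d in A, then the extended model M' constructed in the model-extension lemma (adding classifying objects/features a_C, x_C and adjoint individuals ◇b, ◆b, □y, ■y, where for b', d' ∈ A a new incidence b' I' x_C is added iff b' I y holds for all y in the intent of C^M) also satisfies ∀p (b I p ⇒ d I p). -/
/-!
Common formal infrastructure for the description logic LE-ALC:
syntax of concepts, individual names, ABox terms, the tableaux expansion
rules and completion, and the polarity-based (enriched formal context)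
semantics.
-/

namespace LEALC

/-- LE-ALC concepts: `C ::= D | C₁ ∧ C₂ | C₁ ∨ C₂ | [R_□]C | ⟨R_◇⟩C`. -/
inductive Cpt : Type
  | atom : ℕ → Cpt
  | meet : Cpt → Cpt → Cpt
  | join : Cpt → Cpt → Cpt
  | box  : Cpt → Cpt
  | dia  : Cpt → Cpt
  deriving DecidableEq

/-- Object individual names: ordinary names from `OBJ`, classifying objects
`a_C`, and the prefixed names `◇b`, `◆b` generated by the tableaux. -/
inductive ObName : Type
  | base : ℕ → ObName
  | cls  : Cpt → ObName
  | dia  : ObName → ObName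
  | bdia : ObName → ObName
  deriving DecidableEq

/-- Feature individual names: ordinary names from `FEAT`, classifying features
`x_C`, and the prefixed names `□y`, `■y` generated by the tableaux. -/
inductive FtName : Type
  | base : ℕ → FtName
  | cls  : Cpt → FtName
  | box  : FtName → FtName
  | bbox : FtName → FtName
  deriving DecidableEq

/-- `◇b`, with the identification `◇a_C = a_{◇C}`. -/
def ObName.diaS : ObName → ObName
  | .cls C => .cls (.dia C)
  | b => .dia b

/-- `□y`, with the identification `□x_C = x_{□C}`. -/
def FtName.boxS : FtName → FtName
  | .cls C => .cls (.box C)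
  | y => .box y

/-- Positive (unnegated) ABox terms:
`a I x`, `a R_□ x`, `x R_◇ a`, `a : C`, `x :: C`. -/
inductive PTerm : Type
  | rI   : ObName → FtName → PTerm
  | rbox : ObName → FtName → PTerm
  | rdia : FtName → ObName → PTerm
  | mem  : ObName → Cpt → PTerm
  | fmem : FtName → Cpt → PTerm
  deriving DecidableEq

/-- ABox terms: a positive term or its negation. -/
inductive Term : Type
  | pos : PTerm → Term
  | neg : PTerm → Term
  deriving DecidableEq

/-- The relational terms are `a I x`, `a R_□ x` and `x R_◇ a`. -/
def PTerm.IsRelational : PTerm → Prop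
  | .rI _ _ => True
  | .rbox _ _ => True
  | .rdia _ _ => True
  | .mem _ _ => False
  | .fmem _ _ => False

/-- Subformulas (subconcepts) of a concept. -/
def Cpt.subs : Cpt → Finset Cpt
  | .atom n => {Cpt.atom n}
  | .meet C₁ C₂ => insert (Cpt.meet C₁ C₂) (C₁.subs ∪ C₂.subs)
  | .join C₁ C₂ => insert (Cpt.join C₁ C₂) (C₁.subs ∪ C₂.subs)
  | .box C => insert (Cpt.box C) C.subs
  | .dia C => insert (Cpt.dia C) C.subs

/-- The concepts occurring in a term (subformulas of the concept of a
(possibly negated) membership assertion). -/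
def Term.cpts : Term → Finset Cpt
  | .pos (.mem _ C) => C.subs
  | .pos (.fmem _ C) => C.subs
  | .neg (.mem _ C) => C.subs
  | .neg (.fmem _ C) => C.subs
  | _ => ∅

/-- The concept `C` occurs in the set of terms `A`. -/
def Occurs (C : Cpt) (A : Set Term) : Prop := ∃ t ∈ A, C ∈ t.cpts

def PTerm.objs : PTerm → List ObName
  | .rI b _ => [b]
  | .rbox b _ => [b]
  | .rdia _ b => [b]
  | .mem b _ => [b]
  | .fmem _ _ => []

def PTerm.feats : PTerm → List FtName
  | .rI _ y => [y]
  | .rbox _ y => [y]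
  | .rdia y _ => [y]
  | .mem _ _ => []
  | .fmem y _ => [y]

def Term.objs : Term → List ObName
  | .pos t => t.objs
  | .neg t => t.objs

def Term.feats : Term → List FtName
  | .pos t => t.feats
  | .neg t => t.feats

/-- The object name `b` occurs in the set of terms `S`. -/
def ObOccurs (b : ObName) (S : Set Term) : Prop := ∃ t ∈ S, b ∈ t.objs

/-- The feature name `y` occurs in the set of terms `S`. -/
def FtOccurs (y : FtName) (S : Set Term) : Prop := ∃ t ∈ S, y ∈ t.feats

def ObName.IsBase (b : ObName) : Prop := ∃ n, b = ObName.base n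
def FtName.IsBase (y : FtName) : Prop := ∃ n, y = FtName.base n

/-- A term all of whose individual names are ordinary (non-generated) names. -/
def Term.Plain (t : Term) : Prop :=
  (∀ b ∈ t.objs, b.IsBase) ∧ (∀ y ∈ t.feats, y.IsBase)

/-- An ABox is a set of terms over the ordinary individual names `OBJ`/`FEAT`
(the generated names `a_C`, `x_C`, `◇b`, `◆b`, `□y`, `■y` are fresh). -/
def ABoxWF (A : Set Term) : Prop := ∀ t ∈ A, t.Plain

def Cpt.csize : Cpt → ℕ
  | .atom _ => 1
  | .meet C₁ C₂ => C₁.csize + C₂.csize + 1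
  | .join C₁ C₂ => C₁.csize + C₂.csize + 1
  | .box C => C.csize + 1
  | .dia C => C.csize + 1

def PTerm.psize : PTerm → ℕ
  | .rI _ _ => 1
  | .rbox _ _ => 1
  | .rdia _ _ => 1
  | .mem _ C => C.csize + 1
  | .fmem _ C => C.csize + 1

def Term.tsize : Term → ℕ
  | .pos t => t.psize + 1
  | .neg t => t.psize + 2

/-- The size `|A|` of an ABox. -/
def aboxSize (A : Finset Term) : ℕ := A.sum Term.tsize

/-- Box-depth of a concept. -/
def Cpt.bd : Cpt → ℕ
  | .atom _ => 0
  | .meet C₁ C₂ => max C₁.bd C₂.bd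
  | .join C₁ C₂ => max C₁.bd C₂.bd
  | .box C => C.bd + 1
  | .dia C => C.bd

/-- Diamond-depth of a concept. -/
def Cpt.dd : Cpt → ℕ
  | .atom _ => 0
  | .meet C₁ C₂ => max C₁.dd C₂.dd
  | .join C₁ C₂ => max C₁.dd C₂.dd
  | .box C => C.dd
  | .dia C => C.dd + 1

/-- Box-depth of an object name (names in the input ABox have depth 0,
prefixing changes the depth, classifying names inherit depths from their
concept). -/
def ObName.bd : ObName → ℤ
  | .base _ => 0
  | .cls C => -(C.bd : ℤ)
  | .dia b => b.bd
  | .bdia b => b.bd + 1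

/-- Diamond-depth of an object name. -/
def ObName.dd : ObName → ℤ
  | .base _ => 0
  | .cls C => -(C.dd : ℤ)
  | .dia b => b.dd + 1
  | .bdia b => b.dd

/-- Box-depth of a feature name. -/
def FtName.bd : FtName → ℤ
  | .base _ => 0
  | .cls C => -(C.bd : ℤ)
  | .box y => y.bd + 1
  | .bbox y => y.bd

/-- Diamond-depth of a feature name. -/
def FtName.dd : FtName → ℤ
  | .base _ => 0
  | .cls C => -(C.dd : ℤ)
  | .box y => y.dd
  | .bbox y => y.dd + 1

/-- All concepts occurring in an ABox. -/
def aboxCpts (A : Finset Term) : Finset Cpt := A.biUnion Term.cpts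

/-- `□_D(A)`: maximal box-depth of a concept occurring in `A`. -/
def aboxBd (A : Finset Term) : ℕ := (aboxCpts A).sup Cpt.bd

/-- `◇_D(A)`: maximal diamond-depth of a concept occurring in `A`. -/
def aboxDd (A : Finset Term) : ℕ := (aboxCpts A).sup Cpt.dd

/-- One-step derivability: `Deriv E A S t` holds iff the term `t` can be
added by applying one of the LE-ALC tableaux expansion rules (or the extra
rule `E`) to the current set of terms `S`, `A` being the input ABox (used
for the side conditions of the creation and inverse rules). -/
inductive Deriv (E : Term → Term → Prop) (A S : Set Term) : Term → Prop
  /-- creation rule -/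
  | create_a {C : Cpt} : Occurs C A → Deriv E A S (.pos (.mem (.cls C) C))
  | create_x {C : Cpt} : Occurs C A → Deriv E A S (.pos (.fmem (.cls C) C))
  /-- basic rule -/
  | basic {b y C} : Term.pos (.mem b C) ∈ S → Term.pos (.fmem y C) ∈ S →
      Deriv E A S (.pos (.rI b y))
  /-- rules for the logical connectives -/
  | andA_l {b C₁ C₂} : Term.pos (.mem b (.meet C₁ C₂)) ∈ S → Deriv E A S (.pos (.mem b C₁))
  | andA_r {b C₁ C₂} : Term.pos (.mem b (.meet C₁ C₂)) ∈ S → Deriv E A S (.pos (.mem b C₂))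
  | orX_l {y C₁ C₂} : Term.pos (.fmem y (.join C₁ C₂)) ∈ S → Deriv E A S (.pos (.fmem y C₁))
  | orX_r {y C₁ C₂} : Term.pos (.fmem y (.join C₁ C₂)) ∈ S → Deriv E A S (.pos (.fmem y C₂))
  | boxR {b y C} : Term.pos (.mem b (.box C)) ∈ S → Term.pos (.fmem y C) ∈ S →
      Deriv E A S (.pos (.rbox b y))
  | diaR {b y C} : Term.pos (.fmem y (.dia C)) ∈ S → Term.pos (.mem b C) ∈ S →
      Deriv E A S (.pos (.rdia y b))
  /-- inverse rules for the connectives -/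
  | andA_inv {b C₁ C₂} : Term.pos (.mem b C₁) ∈ S → Term.pos (.mem b C₂) ∈ S →
      Occurs (.meet C₁ C₂) A → Deriv E A S (.pos (.mem b (.meet C₁ C₂)))
  | orX_inv {y C₁ C₂} : Term.pos (.fmem y C₁) ∈ S → Term.pos (.fmem y C₂) ∈ S →
      Occurs (.join C₁ C₂) A → Deriv E A S (.pos (.fmem y (.join C₁ C₂)))
  /-- adjunction rules -/
  | adj_box_l {b y} : Term.pos (.rbox b y) ∈ S → Deriv E A S (.pos (.rI (.bdia b) y))
  | adj_box_r {b y} : Term.pos (.rbox b y) ∈ S → Deriv E A S (.pos (.rI b (FtName.boxS y)))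
  | adj_dia_l {b y} : Term.pos (.rdia y b) ∈ S → Deriv E A S (.pos (.rI (ObName.diaS b) y))
  | adj_dia_r {b y} : Term.pos (.rdia y b) ∈ S → Deriv E A S (.pos (.rI b (.bbox y)))
  /-- I-compatibility rules -/
  | icomp_box {b y} : Term.pos (.rI b (FtName.boxS y)) ∈ S → Deriv E A S (.pos (.rbox b y))
  | icomp_bbox {b y} : Term.pos (.rI b (.bbox y)) ∈ S → Deriv E A S (.pos (.rdia y b))
  | icomp_dia {b y} : Term.pos (.rI (ObName.diaS b) y) ∈ S → Deriv E A S (.pos (.rdia y b))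
  | icomp_bdia {b y} : Term.pos (.rI (.bdia b) y) ∈ S → Deriv E A S (.pos (.rbox b y))
  /-- basic rules for negative assertions -/
  | neg_b {b C} : Term.neg (.mem b C) ∈ S → Deriv E A S (.neg (.rI b (.cls C)))
  | neg_x {y C} : Term.neg (.fmem y C) ∈ S → Deriv E A S (.neg (.rI (.cls C) y))
  /-- appending rules -/
  | app_x {b C} : Term.pos (.rI b (.cls C)) ∈ S → Deriv E A S (.pos (.mem b C))
  | app_a {y C} : Term.pos (.rI (.cls C) y) ∈ S → Deriv E A S (.pos (.fmem y C))
  /-- an additional expansion rule `E` -/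
  | extra {t t'} : E t t' → t ∈ S → Deriv E A S t'

/-- `S` contains `A` and is closed under the expansion rules. -/
def RuleClosed (E : Term → Term → Prop) (A S : Set Term) : Prop :=
  A ⊆ S ∧ ∀ t, Deriv E A S t → t ∈ S

/-- The tableaux completion `Ā` of the ABox `A` (w.r.t. the LE-ALC expansion
rules together with the extra rule `E`): the least set of terms containing
`A` and closed under the rules. -/
def Compl (E : Term → Term → Prop) (A : Set Term) : Set Term :=
  {t | ∀ S : Set Term, RuleClosed E A S → t ∈ S}

/-- No extra expansion rule: the plain LE-ALC tableaux algorithm. -/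
def noExt : Term → Term → Prop := fun _ _ => False

/-- One expansion step of the tableaux algorithm: a rule is applied to the
current set `B` and adds a new term. -/
def Step (E : Term → Term → Prop) (A B B' : Set Term) : Prop :=
  ∃ t, Deriv E A B t ∧ t ∉ B ∧ B' = insert t B

/-- A clash: some relational term occurs together with its negation. -/
def HasClash (S : Set Term) : Prop :=
  ∃ β : PTerm, β.IsRelational ∧ Term.pos β ∈ S ∧ Term.neg β ∈ S

/-- The separation rule `SA(b,d)`: from `b I x` infer `d I x`. -/
def ruleSA (b d : ObName) : Term → Term → Prop :=
  fun t t' => ∃ x : FtName, t = Term.pos (.rI b x) ∧ t' = Term.pos (.rI d x)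

/-- The separation rule `SX(y,z)`: from `a I y` infer `a I z`. -/
def ruleSX (y z : FtName) : Term → Term → Prop :=
  fun t t' => ∃ a : ObName, t = Term.pos (.rI a y) ∧ t' = Term.pos (.rI a z)

/-- The rule `SA(R_□,R_◇,b)`: from `b R_□ y` infer `y R_◇ b`. -/
def ruleSAR (b : ObName) : Term → Term → Prop :=
  fun t t' => ∃ x : FtName, t = Term.pos (.rbox b x) ∧ t' = Term.pos (.rdia x b)

/-- The rule `SX(R_◇,R_□,y)`: from `y R_◇ a` infer `a R_□ y`. -/
def ruleSXR (y : FtName) : Term → Term → Prop :=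
  fun t t' => ∃ a : ObName, t = Term.pos (.rdia y a) ∧ t' = Term.pos (.rbox a y)

/-! ## Semantics: enriched formal contexts -/

/-- `I^{(1)}[B]` -/
def gup {O F : Type} (I : O → F → Prop) (B : Set O) : Set F := {x | ∀ a ∈ B, I a x}

/-- `I^{(0)}[Y]` -/
def gdn {O F : Type} (I : O → F → Prop) (Y : Set F) : Set O := {a | ∀ x ∈ Y, I a x}

/-- Galois-stability for sets of objects. -/
def StableO {O F : Type} (I : O → F → Prop) (B : Set O) : Prop := gdn I (gup I B) = B

/-- Galois-stability for sets of features. -/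
def StableF {O F : Type} (I : O → F → Prop) (Y : Set F) : Prop := gup I (gdn I Y) = Y

/-- An interpretation of LE-ALC: an enriched formal context `(Ob, Ft, I, R_□, R_◇)`
together with interpretations of the individual names and of the atomic
concepts (an atomic concept is interpreted by the formal concept whose
extent is `vA n` and whose intent is `gup I (vA n)`). -/
structure Model where
  Ob : Type
  Ft : Type
  I : Ob → Ft → Prop
  Rb : Ob → Ft → Prop
  Rd : Ft → Ob → Prop
  oi : ObName → Ob
  fi : FtName → Ft
  vA : ℕ → Set Ob

/-- Intent of the interpretation of an atomic concept. -/
def Model.vX (M : Model) (n : ℕ) : Set M.Ft := gup M.I (M.vA n)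

/-- Well-formedness of an interpretation: `R_□` and `R_◇` are `I`-compatible,
and atomic concepts are interpreted by formal concepts. -/
def Model.Good (M : Model) : Prop :=
  (∀ x, StableO M.I {a | M.Rb a x}) ∧
  (∀ a, StableF M.I {x | M.Rb a x}) ∧
  (∀ a, StableF M.I {x | M.Rd x a}) ∧
  (∀ x, StableO M.I {a | M.Rd x a}) ∧
  (∀ n, StableO M.I (M.vA n))

/-- The interpretation `C^M = (extent, intent)` of a concept. -/
def Model.ci (M : Model) : Cpt → Set M.Ob × Set M.Ft
  | .atom n => (M.vA n, M.vX n)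
  | .meet C₁ C₂ =>
      ((Model.ci M C₁).1 ∩ (Model.ci M C₂).1,
        gup M.I ((Model.ci M C₁).1 ∩ (Model.ci M C₂).1))
  | .join C₁ C₂ =>
      (gdn M.I ((Model.ci M C₁).2 ∩ (Model.ci M C₂).2),
        (Model.ci M C₁).2 ∩ (Model.ci M C₂).2)
  | .box C =>
      (gdn M.Rb (Model.ci M C).2, gup M.I (gdn M.Rb (Model.ci M C).2))
  | .dia C =>
      (gdn M.I (gup (fun a x => M.Rd x a) (Model.ci M C).1),
        gup (fun a x => M.Rd x a) (Model.ci M C).1)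

/-- Satisfaction of positive ABox terms. -/
def Model.SatP (M : Model) : PTerm → Prop
  | .rI b y => M.I (M.oi b) (M.fi y)
  | .rbox b y => M.Rb (M.oi b) (M.fi y)
  | .rdia y b => M.Rd (M.fi y) (M.oi b)
  | .mem b C => M.oi b ∈ (Model.ci M C).1
  | .fmem y C => M.fi y ∈ (Model.ci M C).2

/-- Satisfaction of ABox terms. -/
def Model.Sat (M : Model) : Term → Prop
  | .pos t => M.SatP t
  | .neg t => ¬ M.SatP t

/-- `M` is a model of the set of terms `A`. -/
def Model.SatAll (M : Model) (A : Set Term) : Prop := ∀ t ∈ A, M.Sat t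

/-- An ABox is consistent iff it has a model. -/
def Consistent (A : Set Term) : Prop := ∃ M : Model, M.Good ∧ M.SatAll A

/-- `A ⊨ t`: every model of `A` satisfies `t`. -/
def Entails (A : Set Term) (t : Term) : Prop :=
  ∀ M : Model, M.Good → M.SatAll A → M.Sat t

/-- `A ⊨ C₁ ⊑ C₂`: in every model of `A`, `C₁^M ≤ C₂^M` in the concept lattice. -/
def EntailsSub (A : Set Term) (C₁ C₂ : Cpt) : Prop :=
  ∀ M : Model, M.Good → M.SatAll A → (Model.ci M C₁).1 ⊆ (Model.ci M C₂).1

/-! ### Semantic concept operations -/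

/-- The operation `[R_□]` on (extent, intent) pairs. -/
def Model.cbox (M : Model) (c : Set M.Ob × Set M.Ft) : Set M.Ob × Set M.Ft :=
  (gdn M.Rb c.2, gup M.I (gdn M.Rb c.2))

/-- The operation `⟨R_◇⟩` on (extent, intent) pairs. -/
def Model.cdia (M : Model) (c : Set M.Ob × Set M.Ft) : Set M.Ob × Set M.Ft :=
  (gdn M.I (gup (fun a x => M.Rd x a) c.1), gup (fun a x => M.Rd x a) c.1)

/-- The operation `◆` (left adjoint of `[R_□]`). -/
def Model.cbdia (M : Model) (c : Set M.Ob × Set M.Ft) : Set M.Ob × Set M.Ft :=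
  (gdn M.I (gup M.Rb c.1), gup M.Rb c.1)

/-- The operation `■` (right adjoint of `⟨R_◇⟩`). -/
def Model.cbbox (M : Model) (c : Set M.Ob × Set M.Ft) : Set M.Ob × Set M.Ft :=
  (gdn (fun a x => M.Rd x a) c.2, gup M.I (gdn (fun a x => M.Rd x a) c.2))

/-- The concept `𝐚 = (a^{↑↓}, a^{↑})` generated by an object. -/
def Model.genO (M : Model) (a : M.Ob) : Set M.Ob × Set M.Ft :=
  (gdn M.I (gup M.I {a}), gup M.I {a})

/-- The concept `𝐱 = (x^{↓}, x^{↓↑})` generated by a feature. -/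
def Model.genF (M : Model) (x : M.Ft) : Set M.Ob × Set M.Ft :=
  (gdn M.I {x}, gup M.I (gdn M.I {x}))

/-- The concept companion `con(b)` of an object name, interpreted in `M`. -/
def Model.conO (M : Model) : ObName → Set M.Ob × Set M.Ft
  | .base n => M.genO (M.oi (.base n))
  | .cls C => M.genO (M.oi (.cls C))
  | .dia b => M.cdia (Model.conO M b)
  | .bdia b => M.cbdia (Model.conO M b)

/-- The concept companion `con(y)` of a feature name, interpreted in `M`. -/
def Model.conF (M : Model) : FtName → Set M.Ob × Set M.Ft
  | .base n => M.genF (M.fi (.base n))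
  | .cls C => M.genF (M.fi (.cls C))
  | .box y => M.cbox (Model.conF M y)
  | .bbox y => M.cbbox (Model.conF M y)

/-! ### The canonical model built from the tableaux completion -/

/-- Classical `dite`. -/
noncomputable def cdite {α : Sort*} (p : Prop) (f : p → α) (g : ¬ p → α) : α :=
  @dite α p (Classical.dec p) f g

/-- The canonical model built from the tableaux completion `Ā` of `A`:
its objects (resp. features) are the object (resp. feature) names occurring
in `Ā` (plus a dummy point interpreting the names not occurring in `Ā`),
every name occurring in `Ā` is interpreted by itself, the relations are read
off from `Ā`, and an atomic concept `D` is interpreted by the formal concept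
`(x_D^↓, a_D^↑)`. -/
noncomputable def canModel (A : Finset Term) : Model where
  Ob := Option {b : ObName // ObOccurs b (Compl noExt ↑A)}
  Ft := Option {y : FtName // FtOccurs y (Compl noExt ↑A)}
  I := fun o x => ∃ b y, o = some b ∧ x = some y ∧
        Term.pos (.rI b.1 y.1) ∈ Compl noExt ↑A
  Rb := fun o x => ∃ b y, o = some b ∧ x = some y ∧
        Term.pos (.rbox b.1 y.1) ∈ Compl noExt ↑A
  Rd := fun x o => ∃ b y, o = some b ∧ x = some y ∧
        Term.pos (.rdia y.1 b.1) ∈ Compl noExt ↑A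
  oi := fun b => cdite (ObOccurs b (Compl noExt ↑A)) (fun h => some ⟨b, h⟩) (fun _ => none)
  fi := fun y => cdite (FtOccurs y (Compl noExt ↑A)) (fun h => some ⟨y, h⟩) (fun _ => none)
  vA := fun n => {o | ∃ b, o = some b ∧
        Term.pos (.rI b.1 (.cls (.atom n))) ∈ Compl noExt ↑A}

/-! ### ◇-leading and □-leading concepts -/

/-- ◇-leading concepts. -/
inductive DiaLeading : Cpt → Prop
  | atom (n : ℕ) : DiaLeading (.dia (.atom n))
  | dia {C : Cpt} : DiaLeading C → DiaLeading (.dia C)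
  | join {C : Cpt} (C₁ : Cpt) : DiaLeading C → DiaLeading (.join C C₁)
  | meet {C₁ C₂ : Cpt} : DiaLeading C₁ → DiaLeading C₂ → DiaLeading (.meet C₁ C₂)

/-- □-leading concepts. -/
inductive BoxLeading : Cpt → Prop
  | atom (n : ℕ) : BoxLeading (.box (.atom n))
  | box {C : Cpt} : BoxLeading C → BoxLeading (.box C)
  | meet {C : Cpt} (C₁ : Cpt) : BoxLeading C → BoxLeading (.meet C C₁)
  | join {C₁ C₂ : Cpt} : BoxLeading C₁ → BoxLeading C₂ → BoxLeading (.join C₁ C₂)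

/-- If a model `M` of an LE-ALC ABox `A` additionally
satisfies the axiom `∀p (b I p ⇒ d I p)` for object names `b`, `d` in `A`,
then the extended model `M'` constructed in the model-extension lemma
(which preserves `I` on the old domain and interprets the names through the
extension, and in which an old object is `I'`-related to a new feature `x_C`
iff it is `I`-related to every feature in the intent of `C^M`) also satisfies
`∀p (b I p ⇒ d I p)`. -/
theorem extension_preserves_separation_axiom (A : Finset Term)
    (hwf : ABoxWF ↑A) (b d : ObName) (hb : ObOccurs b ↑A) (hd : ObOccurs d ↑A)
    (M : Model) (hG : M.Good) (hM : M.SatAll ↑A)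
    (hax : ∀ x : M.Ft, M.I (M.oi b) x → M.I (M.oi d) x)
    (M' : Model) (ι : M.Ob → M'.Ob) (κ : M.Ft → M'.Ft)
    (hG' : M'.Good) (hM' : M'.SatAll ↑A)
    (hI : ∀ a x, M'.I (ι a) (κ x) ↔ M.I a x)
    (hoi : M'.oi = ι ∘ M.oi) (hfi : M'.fi = κ ∘ M.fi)
    (hnew : ∀ x' : M'.Ft, x' ∉ Set.range κ →
      ∃ C : Cpt, ∀ a : M.Ob,
        (M'.I (ι a) x' ↔ ∀ y ∈ (Model.ci M C).2, M.I a y)) :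
    ∀ x : M'.Ft, M'.I (M'.oi b) x → M'.I (M'.oi d) x := by
  intro x hx
  rw [hoi] at hx ⊢
  simp only [Function.comp_apply] at hx ⊢
  by_cases hr : x ∈ Set.range κ
  · obtain ⟨x₀, rfl⟩ := hr
    rw [hI] at hx ⊢
    exact hax x₀ hx
  · obtain ⟨C, hC⟩ := hnew x hr
    rw [hC] at hx ⊢
    intro y hy
    exact hax y (hx y hy)

end LEALC
end

section
/- For any LE-ALC ABox A and any terms d R_□ z and y R_◇ b, if d R_□ z belongs to the tableaux completion of A ∪ {y R_◇ b}, then d R_□ z belongs to the tableaux completion of A. -/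
/-!
Common formal infrastructure for the description logic LE-ALC:
syntax of concepts, individual names, ABox terms, the tableaux expansion
rules and completion, and the polarity-based (enriched formal context)
semantics.
-/

namespace LEALC

/-- Derivability is monotone in the current set of terms. -/
theorem deriv_mono {E : Term → Term → Prop} {A S S' : Set Term} {t : Term}
    (hss : S ⊆ S') (hd : Deriv E A S t) : Deriv E A S' t := by
  cases hd with
  | create_a h => exact .create_a h
  | create_x h => exact .create_x h
  | basic h1 h2 => exact .basic (hss h1) (hss h2)
  | andA_l h => exact .andA_l (hss h)
  | andA_r h => exact .andA_r (hss h)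
  | orX_l h => exact .orX_l (hss h)
  | orX_r h => exact .orX_r (hss h)
  | boxR h1 h2 => exact .boxR (hss h1) (hss h2)
  | diaR h1 h2 => exact .diaR (hss h1) (hss h2)
  | andA_inv h1 h2 h3 => exact .andA_inv (hss h1) (hss h2) h3
  | orX_inv h1 h2 h3 => exact .orX_inv (hss h1) (hss h2) h3
  | adj_box_l h => exact .adj_box_l (hss h)
  | adj_box_r h => exact .adj_box_r (hss h)
  | adj_dia_l h => exact .adj_dia_l (hss h)
  | adj_dia_r h => exact .adj_dia_r (hss h)
  | icomp_box h => exact .icomp_box (hss h)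
  | icomp_bbox h => exact .icomp_bbox (hss h)
  | icomp_dia h => exact .icomp_dia (hss h)
  | icomp_bdia h => exact .icomp_bdia (hss h)
  | neg_b h => exact .neg_b (hss h)
  | neg_x h => exact .neg_x (hss h)
  | app_x h => exact .app_x (hss h)
  | app_a h => exact .app_a (hss h)
  | extra he h => exact .extra he (hss h)

/-- The completion is itself rule-closed. -/
theorem compl_closed (E : Term → Term → Prop) (A : Set Term) :
    RuleClosed E A (Compl E A) := by
  constructor
  · intro t ht S hS
    exact hS.1 ht
  · intro t hd S hS
    exact hS.2 t (deriv_mono (fun u (hu : u ∈ Compl E A) => hu S hS) hd)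

/-- For any LE-ALC ABox `A` and any terms `d R_□ z` and
`y R_◇ b`, if `d R_□ z` belongs to the tableaux completion of
`A ∪ {y R_◇ b}`, then `d R_□ z` belongs to the tableaux completion of `A`. -/
theorem rbox_not_from_rdia (A : Finset Term) (hwf : ABoxWF ↑A)
    (d : ObName) (z : FtName) (y : FtName) (b : ObName)
    (hplain : (Term.pos (.rdia y b)).Plain) :
    Term.pos (.rbox d z) ∈ Compl noExt (insert (Term.pos (.rdia y b)) ↑A) →
    Term.pos (.rbox d z) ∈ Compl noExt ↑A := by
  intro hmem
  obtain ⟨n, rfl⟩ : ObName.IsBase b := hplain.1 b (by simp [Term.objs, PTerm.objs])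
  obtain ⟨m, rfl⟩ : FtName.IsBase y := hplain.2 y (by simp [Term.feats, PTerm.feats])
  set b : ObName := .base n with hbdef
  set y : FtName := .base m with hydef
  set C0 : Set Term := Compl noExt (↑A : Set Term) with hC0def
  set X : Set Term :=
    {Term.pos (.rdia y b), Term.pos (.rI (.dia b) y), Term.pos (.rI b (.bbox y))} with hXdef
  set S : Set Term := C0 ∪ X with hSdef
  -- the inserted term mentions no concept
  have hOcc : ∀ C : Cpt, Occurs C (insert (Term.pos (.rdia y b)) ↑A) → Occurs C (↑A : Set Term) := by
    rintro C ⟨t', ht', hC⟩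
    rcases Set.mem_insert_iff.mp ht' with rfl | ht'
    · exact absurd hC (Finset.notMem_empty C)
    · exact ⟨t', ht', hC⟩
  have hC0S : ∀ u : Term, Deriv noExt ↑A C0 u → u ∈ S := by
    intro u h
    exact Or.inl ((compl_closed noExt ↑A).2 u h)
  -- extraction lemmas: such terms in S are already in C0
  have hmemC : ∀ {b' C}, Term.pos (.mem b' C) ∈ S → Term.pos (.mem b' C) ∈ C0 := by
    rintro b' C (h | h)
    · exact h
    · simp [hXdef] at h
  have hfmemC : ∀ {y' C}, Term.pos (.fmem y' C) ∈ S → Term.pos (.fmem y' C) ∈ C0 := by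
    rintro y' C (h | h)
    · exact h
    · simp [hXdef] at h
  have hnegC : ∀ {p : PTerm}, Term.neg p ∈ S → Term.neg p ∈ C0 := by
    rintro p (h | h)
    · exact h
    · simp [hXdef] at h
  have hrboxC : ∀ {b' y'}, Term.pos (.rbox b' y') ∈ S → Term.pos (.rbox b' y') ∈ C0 := by
    rintro b' y' (h | h)
    · exact h
    · simp [hXdef] at h
  have hS : RuleClosed noExt (insert (Term.pos (.rdia y b)) ↑A) S := by
    constructor
    · intro u hu
      rcases Set.mem_insert_iff.mp hu with rfl | hu
      · exact Or.inr (by simp [hXdef])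
      · exact Or.inl (fun T hT => hT.1 hu)
    · intro u hd
      cases hd with
      | create_a h => exact hC0S _ (.create_a (hOcc _ h))
      | create_x h => exact hC0S _ (.create_x (hOcc _ h))
      | basic h1 h2 => exact hC0S _ (.basic (hmemC h1) (hfmemC h2))
      | andA_l h => exact hC0S _ (.andA_l (hmemC h))
      | andA_r h => exact hC0S _ (.andA_r (hmemC h))
      | orX_l h => exact hC0S _ (.orX_l (hfmemC h))
      | orX_r h => exact hC0S _ (.orX_r (hfmemC h))
      | boxR h1 h2 => exact hC0S _ (.boxR (hmemC h1) (hfmemC h2))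
      | diaR h1 h2 => exact hC0S _ (.diaR (hfmemC h1) (hmemC h2))
      | andA_inv h1 h2 h3 =>
          exact hC0S _ (.andA_inv (hmemC h1) (hmemC h2) (hOcc _ h3))
      | orX_inv h1 h2 h3 =>
          exact hC0S _ (.orX_inv (hfmemC h1) (hfmemC h2) (hOcc _ h3))
      | adj_box_l h => exact hC0S _ (.adj_box_l (hrboxC h))
      | adj_box_r h => exact hC0S _ (.adj_box_r (hrboxC h))
      | adj_dia_l h =>
          rcases h with h | h
          · exact hC0S _ (.adj_dia_l h)
          · -- premise is a term of X; only `rdia y b` matches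
            simp only [hXdef, Set.mem_insert_iff, Set.mem_singleton_iff] at h
            rcases h with h | h | h
            · injection h with h'
              injection h' with e1 e2
              subst e1; subst e2
              exact Or.inr (by simp [hXdef, ObName.diaS])
            · exact absurd h (by simp)
            · exact absurd h (by simp)
      | adj_dia_r h =>
          rcases h with h | h
          · exact hC0S _ (.adj_dia_r h)
          · simp only [hXdef, Set.mem_insert_iff, Set.mem_singleton_iff] at h
            rcases h with h | h | h
            · injection h with h'
              injection h' with e1 e2
              subst e1; subst e2
              exact Or.inr (by simp [hXdef])
            · exact absurd h (by simp)
            · exact absurd h (by simp)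
      | icomp_box h =>
          rename_i b' y'
          rcases h with h | h
          · exact hC0S _ (.icomp_box h)
          · exfalso
            simp only [hXdef, Set.mem_insert_iff, Set.mem_singleton_iff] at h
            cases y' <;> simp [FtName.boxS, hbdef, hydef] at h
      | icomp_bbox h =>
          rcases h with h | h
          · exact hC0S _ (.icomp_bbox h)
          · simp only [hXdef, Set.mem_insert_iff, Set.mem_singleton_iff] at h
            rcases h with h | h | h
            · exact absurd h (by simp)
            · exact absurd h (by simp)
            · injection h with h'
              injection h' with e1 e2
              injection e2 with e2
              subst e1; subst e2
              exact Or.inr (by simp [hXdef])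
      | icomp_dia h =>
          rename_i b' y'
          rcases h with h | h
          · exact hC0S _ (.icomp_dia h)
          · simp only [hXdef, Set.mem_insert_iff, Set.mem_singleton_iff] at h
            rcases h with h | h | h
            · exact absurd h (by cases b' <;> simp [ObName.diaS])
            · have hb' : b' = b := by
                cases b' <;> simp [ObName.diaS, hbdef, hydef] at h
                exact h.1.symm ▸ rfl
              have hy' : y' = y := by
                cases b' <;> simp [ObName.diaS, hbdef, hydef] at h
                exact h.2
              subst hb'; subst hy'
              exact Or.inr (by simp [hXdef])
            · exact absurd h (by cases b' <;> simp [ObName.diaS, hbdef])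
      | icomp_bdia h =>
          rcases h with h | h
          · exact hC0S _ (.icomp_bdia h)
          · exfalso; simp [hXdef, hbdef] at h
      | neg_b h => exact hC0S _ (.neg_b (hnegC h))
      | neg_x h => exact hC0S _ (.neg_x (hnegC h))
      | app_x h =>
          rcases h with h | h
          · exact hC0S _ (.app_x h)
          · exfalso; simp [hXdef, hydef] at h
      | app_a h =>
          rcases h with h | h
          · exact hC0S _ (.app_a h)
          · exfalso; simp [hXdef, hbdef] at h
      | extra he h => exact he.elim
  have : Term.pos (.rbox d z) ∈ S := hmem S hS
  rcases this with h | h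
  · exact h
  · exfalso; simp [hXdef] at h

end LEALC
end
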